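/- arXiv:1403.6195 — 2 statements merged into one kernel-verified Lean document; each statement's English description precedes it below -/
import Mathlib

section
/- For all ρ with -1 ≤ ρ ≤ 1, the maximum over y ∈ ℝ of |Φ(y) - Φ(y·√(1-ρ²))| is at most |ρ|/2, where Φ is the standard normal CDF. -/
/-!
Write `g t = exp (-t² / 2)`. For `0 ≤ a ≤ b` the substitution `t = √(a² + s²)`, whose derivative
is at most `1`, gives `∫_a^b g ≤ e^{-a²/2} ∫_0^{√(b² - a²)} g`. Together with Pólya's bound
`(∫_0^L g)² ≤ (π/2)(1 - e^{-L²})` this yields `(∫_a^b g)² ≤ (π/2)(e^{-a²} - e^{-b²})`, the Gaussian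
mass of the quarter annulus containing `[a, b]²`. For `a = c b` with `c = √(1 - ρ²)`, convexity of
`exp` bounds `e^{-c²b²} - e^{-b²}` by `1 - c² ≤ ρ²`, and dividing by `2π` gives the claim. The case
`y < 0` follows from the symmetry of `g`.
-/

open MeasureTheory Real

noncomputable def stdPhi (x : ℝ) : ℝ :=
  ∫ t in Set.Iic x, Real.exp (-t ^ 2 / 2) / Real.sqrt (2 * Real.pi)

noncomputable def gauss (t : ℝ) : ℝ := exp (-t ^ 2 / 2)

lemma continuous_gauss : Continuous gauss := by unfold gauss; fun_prop

lemma gauss_nonneg (t : ℝ) : 0 ≤ gauss t := (exp_pos _).le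

lemma gauss_neg (t : ℝ) : gauss (-t) = gauss t := by simp [gauss]

lemma integrable_gauss : Integrable gauss := by
  convert integrable_exp_neg_mul_sq (b := 1 / 2) (by norm_num) using 2 with t
  simp only [gauss]
  ring_nf

lemma hasDerivAt_integral_gauss (x : ℝ) :
    HasDerivAt (fun L => ∫ t in 0..L, gauss t) (gauss x) x :=
  intervalIntegral.integral_hasDerivAt_right (continuous_gauss.intervalIntegrable _ _)
    (continuous_gauss.stronglyMeasurableAtFilter _ _) continuous_gauss.continuousAt

lemma sq_integral_gauss_eq (L : ℝ) :
    (∫ t in 0..L, gauss t) ^ 2 =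
      ∫ t in 0..L, ∫ u in (0 : ℝ)..1, 2 * t * exp (-(t ^ 2 * (1 + u ^ 2)) / 2) := by
  have hderiv : ∀ x ∈ Set.uIcc 0 L, HasDerivAt (fun L => (∫ t in 0..L, gauss t) ^ 2)
      (2 * (∫ t in 0..x, gauss t) * gauss x) x := fun x _ =>
    ((hasDerivAt_integral_gauss x).pow 2).congr_deriv (by ring)
  have hcont : Continuous fun x => 2 * (∫ t in 0..x, gauss t) * gauss x :=
    (continuous_const.mul (continuous_iff_continuousAt.2 fun x =>
      (hasDerivAt_integral_gauss x).continuousAt)).mul continuous_gauss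
  calc (∫ t in 0..L, gauss t) ^ 2 = ∫ x in 0..L, 2 * (∫ t in 0..x, gauss t) * gauss x := by
        rw [intervalIntegral.integral_eq_sub_of_hasDerivAt hderiv (hcont.intervalIntegrable _ _)]
        simp
    _ = _ := by
      refine intervalIntegral.integral_congr fun t _ => ?_
      have hscale : ∫ s in 0..t, gauss s = t * ∫ u in (0 : ℝ)..1, gauss (t * u) := by
        simp [intervalIntegral.mul_integral_comp_mul_left]
      rw [hscale, ← intervalIntegral.integral_const_mul, ← intervalIntegral.integral_const_mul,
        ← intervalIntegral.integral_mul_const]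
      refine intervalIntegral.integral_congr fun u _ => ?_
      simp only [gauss]
      rw [mul_assoc, mul_assoc, ← exp_add]
      ring_nf

lemma integral_mul_exp_neg_sq_mul (k L : ℝ) (hk : k ≠ 0) :
    ∫ t in 0..L, 2 * t * exp (-(t ^ 2 * k) / 2) = 2 / k * (1 - exp (-(L ^ 2 * k) / 2)) := by
  have hderiv : ∀ t ∈ Set.uIcc 0 L, HasDerivAt (fun t => -(2 / k) * exp (-(t ^ 2 * k) / 2))
      (2 * t * exp (-(t ^ 2 * k) / 2)) t := fun t _ => by
    have hexponent : HasDerivAt (fun t : ℝ => -(t ^ 2 * k) / 2) (-(t * k)) t :=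
      ((((hasDerivAt_pow 2 t).mul_const k).neg).div_const 2).congr_deriv (by ring)
    exact (hexponent.exp.const_mul (-(2 / k))).congr_deriv (by field_simp)
  rw [intervalIntegral.integral_eq_sub_of_hasDerivAt hderiv
    ((by fun_prop : Continuous _).intervalIntegrable _ _)]
  simp only [ne_eq, OfNat.ofNat_ne_zero, not_false_eq_true, zero_pow, zero_mul, neg_zero,
    zero_div, exp_zero, mul_one]
  ring

lemma sq_integral_gauss_eq_integral_div (L : ℝ) (hL : 0 ≤ L) :
    (∫ t in 0..L, gauss t) ^ 2 =
      ∫ u in (0 : ℝ)..1, 2 / (1 + u ^ 2) * (1 - exp (-(L ^ 2 * (1 + u ^ 2)) / 2)) := by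
  have hint : Integrable (Function.uncurry fun t u : ℝ => 2 * t * exp (-(t ^ 2 * (1 + u ^ 2)) / 2))
      ((volume.restrict (Set.Ioc 0 L)).prod (volume.restrict (Set.Ioc (0 : ℝ) 1))) := by
    rw [Measure.prod_restrict]
    refine IntegrableOn.mono_set ?_ (Set.prod_mono Set.Ioc_subset_Icc_self Set.Ioc_subset_Icc_self)
    rw [Set.Icc_prod_Icc]
    exact (by fun_prop : Continuous _).continuousOn.integrableOn_compact isCompact_Icc
  rw [sq_integral_gauss_eq]
  simp_rw [intervalIntegral.integral_of_le hL, intervalIntegral.integral_of_le zero_le_one]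
  rw [integral_integral_swap hint]
  refine setIntegral_congr_fun measurableSet_Ioc fun u _ => ?_
  rw [← intervalIntegral.integral_of_le hL]
  exact integral_mul_exp_neg_sq_mul _ _ (by positivity)

lemma sq_integral_gauss_le (L : ℝ) (hL : 0 ≤ L) :
    (∫ t in 0..L, gauss t) ^ 2 ≤ π / 2 * (1 - exp (-L ^ 2)) := by
  have hpoint : ∀ u ∈ Set.Icc (0 : ℝ) 1, 2 / (1 + u ^ 2) * (1 - exp (-(L ^ 2 * (1 + u ^ 2)) / 2))
      ≤ 2 * (1 - exp (-L ^ 2)) * (1 + u ^ 2)⁻¹ := fun u ⟨hu0, hu1⟩ => by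
    rw [div_eq_mul_inv, mul_right_comm]
    gcongr
    nlinarith [mul_le_mul_of_nonneg_left (pow_le_one₀ hu0 hu1 : u ^ 2 ≤ 1) (sq_nonneg L)]
  calc (∫ t in 0..L, gauss t) ^ 2
      ≤ ∫ u in (0 : ℝ)..1, 2 * (1 - exp (-L ^ 2)) * (1 + u ^ 2)⁻¹ := by
        rw [sq_integral_gauss_eq_integral_div L hL]
        have hcont : ∀ {F : ℝ → ℝ}, Continuous F → IntervalIntegrable F volume 0 1 :=
          fun hF => hF.intervalIntegrable _ _
        exact intervalIntegral.integral_mono_on zero_le_one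
          (hcont (by fun_prop (disch := exact fun x => by positivity)))
          (hcont (by fun_prop (disch := exact fun x => by positivity))) hpoint
    _ = π / 2 * (1 - exp (-L ^ 2)) := by
        rw [intervalIntegral.integral_const_mul, integral_inv_one_add_sq, arctan_one, arctan_zero]
        ring

lemma integral_gauss_le_exp_mul (a b : ℝ) (ha : 0 ≤ a) (hab : a ≤ b) :
    ∫ t in a..b, gauss t ≤ exp (-a ^ 2 / 2) * ∫ s in 0..√(b ^ 2 - a ^ 2), gauss s := by
  set L := √(b ^ 2 - a ^ 2)
  have hL : 0 ≤ L := sqrt_nonneg _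
  set f : ℝ → ℝ := fun s => √(a ^ 2 + s ^ 2)
  set f' : ℝ → ℝ := fun s => s / √(a ^ 2 + s ^ 2)
  have hf0 : f 0 = a := by simp [f, sqrt_sq ha]
  have hfL : f L = b := by
    simp only [f, L]
    rw [sq_sqrt (by nlinarith), add_sub_cancel, sqrt_sq (ha.trans hab)]
  have hderiv : ∀ s ∈ Set.Ioo (min 0 L) (max 0 L), HasDerivAt f (f' s) s := by
    intro s hs
    rw [min_eq_left hL] at hs
    have hpos : 0 < a ^ 2 + s ^ 2 := by nlinarith [hs.1]
    exact (((hasDerivAt_pow 2 s).const_add (a ^ 2)).sqrt hpos.ne').congr_deriv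
      (by simp only [f']; field_simp; norm_num)
  have hf'_nonneg : ∀ s, 0 ≤ s → 0 ≤ f' s := fun s hs => div_nonneg hs (sqrt_nonneg _)
  have hf'_le_one : ∀ s, f' s ≤ 1 := fun s =>
    div_le_one_of_le₀ (le_sqrt_of_sq_le (by nlinarith)) (sqrt_nonneg _)
  have hsubst := intervalIntegral.integral_comp_mul_deriv_of_deriv_nonneg (g := gauss)
    (by fun_prop : Continuous f).continuousOn hderiv
    (fun s hs => hf'_nonneg s (by rw [min_eq_left hL] at hs; exact hs.1.le))
  rw [hf0, hfL] at hsubst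
  rw [← hsubst, ← intervalIntegral.integral_const_mul, intervalIntegral.integral_of_le hL,
    intervalIntegral.integral_of_le hL]
  refine integral_mono_of_nonneg ?_ (continuous_gauss.const_mul _).integrableOn_Ioc ?_
  · exact ae_restrict_of_forall_mem measurableSet_Ioc fun s hs =>
      mul_nonneg (gauss_nonneg _) (hf'_nonneg s hs.1.le)
  · refine ae_restrict_of_forall_mem measurableSet_Ioc fun s _ => ?_
    have hgauss_f : gauss (f s) = exp (-a ^ 2 / 2) * gauss s := by
      simp only [gauss, f]
      rw [sq_sqrt (by positivity), ← exp_add]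
      ring_nf
    simp only [Function.comp_apply, hgauss_f]
    exact mul_le_of_le_one_right (mul_nonneg (exp_pos _).le (gauss_nonneg s)) (hf'_le_one s)

lemma sq_integral_gauss_le_exp_sub_exp (a b : ℝ) (ha : 0 ≤ a) (hab : a ≤ b) :
    (∫ t in a..b, gauss t) ^ 2 ≤ π / 2 * (exp (-a ^ 2) - exp (-b ^ 2)) := by
  have hnonneg : 0 ≤ ∫ t in a..b, gauss t :=
    intervalIntegral.integral_nonneg hab fun t _ => gauss_nonneg t
  have hpolya := sq_integral_gauss_le _ (sqrt_nonneg (b ^ 2 - a ^ 2))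
  rw [sq_sqrt (by nlinarith)] at hpolya
  calc (∫ t in a..b, gauss t) ^ 2
      ≤ (exp (-a ^ 2 / 2) * ∫ s in 0..√(b ^ 2 - a ^ 2), gauss s) ^ 2 :=
        pow_le_pow_left₀ hnonneg (integral_gauss_le_exp_mul a b ha hab) 2
    _ = exp (-a ^ 2) * (∫ s in 0..√(b ^ 2 - a ^ 2), gauss s) ^ 2 := by
        rw [mul_pow, ← exp_nat_mul]
        ring_nf
    _ ≤ exp (-a ^ 2) * (π / 2 * (1 - exp (-(b ^ 2 - a ^ 2)))) := by gcongr
    _ = π / 2 * (exp (-a ^ 2) - exp (-b ^ 2)) := by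
        rw [mul_left_comm, mul_one_sub, ← exp_add]
        ring_nf

lemma exp_neg_mul_sub_exp_neg_le {l x : ℝ} (hl0 : 0 ≤ l) (hl1 : l ≤ 1) (hx : 0 ≤ x) :
    exp (-(l * x)) - exp (-x) ≤ 1 - l := by
  have hconv : exp (-(l * x)) ≤ l * exp (-x) + (1 - l) := by
    simpa using convexOn_exp.2 (Set.mem_univ (-x)) (Set.mem_univ 0) hl0 (sub_nonneg.2 hl1)
      (by ring)
  have hexp : exp (-x) ≤ 1 := exp_le_one_iff.2 (neg_nonpos.2 hx)
  nlinarith [exp_pos (-x)]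

lemma sq_integral_gauss_mul_le (c y : ℝ) (hc0 : 0 ≤ c) (hc1 : c ≤ 1) :
    (∫ t in c * y..y, gauss t) ^ 2 ≤ π / 2 * (1 - c ^ 2) := by
  wlog hy : 0 ≤ y generalizing y
  · have hsymm : (∫ t in c * y..y, gauss t) ^ 2 = (∫ t in c * -y..-y, gauss t) ^ 2 := by
      rw [mul_neg, ← intervalIntegral.integral_comp_neg]
      simp only [gauss_neg]
      rw [intervalIntegral.integral_symm, neg_sq]
    rw [hsymm]
    exact this (-y) (by linarith)
  calc (∫ t in c * y..y, gauss t) ^ 2 ≤ π / 2 * (exp (-(c * y) ^ 2) - exp (-y ^ 2)) :=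
        sq_integral_gauss_le_exp_sub_exp _ _ (by positivity) (mul_le_of_le_one_left hy hc1)
    _ ≤ π / 2 * (1 - c ^ 2) := by
        rw [mul_pow]
        exact mul_le_mul_of_nonneg_left
          (exp_neg_mul_sub_exp_neg_le (sq_nonneg c) (pow_le_one₀ hc0 hc1) (sq_nonneg y))
          (by positivity)

lemma stdPhi_sub_stdPhi (u v : ℝ) :
    stdPhi v - stdPhi u = (∫ t in u..v, gauss t) / √(2 * π) := by
  have hint : Integrable fun t => exp (-t ^ 2 / 2) / √(2 * π) := integrable_gauss.div_const _
  rw [stdPhi, stdPhi, intervalIntegral.integral_Iic_sub_Iic hint.integrableOn hint.integrableOn,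
    intervalIntegral.integral_div]
  rfl

theorem stmt0_general (ρ : ℝ) (y : ℝ) :
    |stdPhi y - stdPhi (y * Real.sqrt (1 - ρ ^ 2))| ≤ |ρ| / 2 := by
  set c := √(1 - ρ ^ 2)
  have hgap : 1 - c ^ 2 ≤ ρ ^ 2 := by
    rw [sq_sqrt']
    linarith [le_max_left (1 - ρ ^ 2) 0]
  have hbound := sq_integral_gauss_mul_le c y (sqrt_nonneg _)
    (sqrt_le_one.2 (sub_le_self _ (sq_nonneg ρ)))
  refine abs_le_of_sq_le_sq ?_ (by positivity)
  rw [mul_comm, stdPhi_sub_stdPhi, div_pow, sq_sqrt (by positivity)]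
  calc (∫ t in c * y..y, gauss t) ^ 2 / (2 * π) ≤ π / 2 * ρ ^ 2 / (2 * π) := by
        gcongr
        exact hbound.trans (by gcongr)
    _ = (|ρ| / 2) ^ 2 := by
        rw [div_pow, sq_abs]
        field_simp

theorem stmt0 (ρ : ℝ) (hρ : -1 ≤ ρ ∧ ρ ≤ 1) (y : ℝ) :
    |stdPhi y - stdPhi (y * Real.sqrt (1 - ρ ^ 2))| ≤ |ρ| / 2 :=
  stmt0_general ρ y
end

section
/- If τ and ρ in [-1,1] satisfy sin(πτ/2) = 2·sin(πρ/6), then sgn(τ) = sgn(ρ) and (π/3)|ρ| ≤ (π/2)|τ| ≤ (π/2)|ρ|. -/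
open Real

/-!
With `x = πτ/2` and `y = πρ/6` the hypothesis reads `sin x = 2 sin y`, where `|x| ≤ π/2` and
`|y| ≤ π/6`. On `(-π, π)` the sine has the sign of its argument, which gives `sgn τ = sgn ρ`;
by oddness we may then pass to `|x|` and `|y|`. Since sine is increasing on `[-π/2, π/2]`,
`2|y| ≤ |x|` follows from `sin 2y = 2 sin y cos y ≤ 2 sin y`, and `|x| ≤ 3|y|` from
`sin 3y - 2 sin y = sin y (1 - 4 sin² y) ≥ 0`, as `0 ≤ sin |y| ≤ 1/2`.
-/

namespace Real

theorem sign_congr {a b : ℝ} (hpos : 0 < a ↔ 0 < b) (hneg : a < 0 ↔ b < 0) :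
    sign a = sign b := by
  simp only [sign, hpos, hneg]

theorem sign_mul_of_pos {c : ℝ} (hc : 0 < c) (x : ℝ) : sign (c * x) = sign x :=
  sign_congr (mul_pos_iff_of_pos_left hc)
    ⟨fun h => neg_of_mul_neg_right h hc.le, mul_neg_of_pos_of_neg hc⟩

theorem sign_sin_of_abs_lt_pi {x : ℝ} (hx : |x| < π) : sign (sin x) = sign x := by
  obtain ⟨hx₁, hx₂⟩ := abs_lt.mp hx
  rcases lt_trichotomy x 0 with h | rfl | h
  · rw [sign_of_neg h, sign_of_neg (sin_neg_of_neg_of_neg_pi_lt h hx₁)]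
  · rw [sin_zero]
  · rw [sign_of_pos h, sign_of_pos (sin_pos_of_pos_of_lt_pi h hx₂)]

theorem two_mul_le_of_sin_eq_two_mul_sin {x y : ℝ} (hx₁ : -(π / 2) ≤ x) (hy₀ : 0 ≤ y)
    (hy₁ : y ≤ π / 4) (h : sin x = 2 * sin y) : 2 * y ≤ x := by
  refine le_of_not_gt fun hlt => ?_
  have hsin : sin (2 * y) ≤ 2 * sin y := by
    rw [sin_two_mul]
    nlinarith [cos_le_one y, sin_nonneg_of_nonneg_of_le_pi hy₀ (by linarith [pi_pos])]
  linarith [sin_lt_sin_of_lt_of_le_pi_div_two hx₁ (by linarith) hlt]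

theorem le_three_mul_of_sin_eq_two_mul_sin {x y : ℝ} (hx₂ : x ≤ π / 2) (hy₀ : 0 ≤ y)
    (hy₁ : y ≤ π / 6) (h : sin x = 2 * sin y) : x ≤ 3 * y := by
  refine le_of_not_gt fun hlt => ?_
  have hs₀ : 0 ≤ sin y := sin_nonneg_of_nonneg_of_le_pi hy₀ (by linarith [pi_pos])
  have hs₁ : sin y ≤ 1 / 2 := by
    simpa [sin_pi_div_six] using
      sin_le_sin_of_le_of_le_pi_div_two (by linarith [pi_pos]) (by linarith [pi_pos]) hy₁
  have hsin : 2 * sin y ≤ sin (3 * y) := by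
    rw [sin_three_mul]
    nlinarith [mul_nonneg hs₀ (by nlinarith : (0 : ℝ) ≤ 1 - 4 * sin y ^ 2)]
  linarith [sin_lt_sin_of_lt_of_le_pi_div_two (by linarith [pi_pos]) hx₂ hlt]

end Real

theorem stmt3 (τ ρ : ℝ) (hτ : τ ∈ Set.Icc (-1 : ℝ) 1) (hρ : ρ ∈ Set.Icc (-1 : ℝ) 1)
    (h : Real.sin (Real.pi * τ / 2) = 2 * Real.sin (Real.pi * ρ / 6)) :
    Real.sign τ = Real.sign ρ ∧
      (Real.pi / 3) * |ρ| ≤ (Real.pi / 2) * |τ| ∧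
      (Real.pi / 2) * |τ| ≤ (Real.pi / 2) * |ρ| := by
  have hπ := pi_pos
  rw [mul_div_right_comm, mul_div_right_comm] at h
  set x := π / 2 * τ
  set y := π / 6 * ρ
  have hx : |x| = π / 2 * |τ| := by rw [abs_mul, abs_of_pos (by positivity)]
  have hy : |y| = π / 6 * |ρ| := by rw [abs_mul, abs_of_pos (by positivity)]
  have hτ₁ : |τ| ≤ 1 := abs_le.mpr hτ
  have hρ₁ : |ρ| ≤ 1 := abs_le.mpr hρ
  have hsign : sign τ = sign ρ := by
    calc sign τ = sign (sin x) := by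
          rw [sign_sin_of_abs_lt_pi (by nlinarith), sign_mul_of_pos (by positivity)]
      _ = sign (sin y) := by rw [h, sign_mul_of_pos two_pos]
      _ = sign ρ := by
          rw [sign_sin_of_abs_lt_pi (by nlinarith), sign_mul_of_pos (by positivity)]
  have habs : sin |x| = 2 * sin |y| := by
    rw [← abs_sin_eq_sin_abs_of_abs_le_pi (by nlinarith),
      ← abs_sin_eq_sin_abs_of_abs_le_pi (by nlinarith), h, abs_mul, abs_two]
  have h₁ := two_mul_le_of_sin_eq_two_mul_sin (by linarith [abs_nonneg x]) (abs_nonneg y)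
    (by nlinarith) habs
  have h₂ := le_three_mul_of_sin_eq_two_mul_sin (by nlinarith) (abs_nonneg y) (by nlinarith) habs
  refine ⟨hsign, ?_, ?_⟩ <;> linarith
end
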